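/- Let G be a countably infinite group acting on ℓ∞(G,K) by left translation. Then the only G-invariant densely defined lower semi-continuous trace on ℓ∞(G,K) is zero. -/

import Mathlib

/-!
By lower semicontinuity it suffices that `τ` kills every bounded positive function `g` with
finite-rank values, since the cutoffs `(f - ε)₊` of a compact positive `f` have finite rank.
If `τ g ≠ 0`, invariance and the infinitude of `G` give translates `b k` of pieces of `g`, all of
trace at least some `δ > 0`, of which only finitely many are non-zero at any point of `G`: either
a finitely supported piece of `g` has non-zero trace and we translate it, or all of them are null
and we translate cofinite pieces, which carry all of `τ g`. Conjugating `b k` by isometries `U k`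
with pairwise orthogonal ranges does not change its trace (trace property for `U k * √(b k)`),
and `∑ k, U k * b k * (U k)⋆` is a bounded positive finite-rank function of trace at least `N * δ`
for every `N`, contradicting finiteness of `τ` on finite-rank elements.
-/

open scoped ENNReal

/-- The Hilbert space `ℓ²(ℕ)`. -/
noncomputable abbrev HS : Type := lp (fun _ : ℕ => ℂ) 2

/-- `f` is an element of `ℓ∞(G, B(HS))`. -/
def Bdd {G : Type*} (f : G → HS →L[ℂ] HS) : Prop := ∃ C : ℝ, ∀ t, ‖f t‖ ≤ C

/-- `f` takes values in the compact operators. -/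
def Cpt {G : Type*} (f : G → HS →L[ℂ] HS) : Prop := ∀ t, IsCompactOperator (f t)

/-- `f` takes positive operator values. -/
def Pos {G : Type*} (f : G → HS →L[ℂ] HS) : Prop := ∀ t, (f t).IsPositive

/-- `T` is a finite-rank operator. -/
def FinRank (T : HS →L[ℂ] HS) : Prop :=
  FiniteDimensional ℂ (LinearMap.range (T : HS →ₗ[ℂ] HS))

open scoped InnerProductSpace lp

section CompactOperator

variable {𝕜 E F : Type*} [RCLike 𝕜] [NormedAddCommGroup E] [NormedSpace 𝕜 E]
  [NormedAddCommGroup F] [NormedSpace 𝕜 F]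

theorem isCompactOperator_of_finiteDimensional_range (T : E →L[𝕜] F)
    [FiniteDimensional 𝕜 (LinearMap.range (T : E →ₗ[𝕜] F))] : IsCompactOperator T :=
  (isCompactOperator_of_locallyCompactSpace_dom
    (T.codRestrict (LinearMap.range (T : E →ₗ[𝕜] F)) fun x => ⟨x, rfl⟩)).clm_comp
    (Submodule.subtypeL _)

theorem finiteDimensional_range_of_isCompactOperator_comp_eq [CompleteSpace E] {K : E →L[𝕜] E}
    {T : F →L[𝕜] E} (hK : IsCompactOperator K) (hKT : K ∘L T = T) :
    FiniteDimensional 𝕜 (LinearMap.range (T : F →ₗ[𝕜] E)) := by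
  set W := (LinearMap.range (T : F →ₗ[𝕜] E)).topologicalClosure
  have hKW : ∀ w ∈ W, K w = w := by
    refine fun w hw => closure_minimal ?_ (isClosed_eq K.continuous continuous_id) hw
    rintro _ ⟨x, rfl⟩
    exact congrArg (· x) hKT
  have : CompleteSpace W := (Submodule.isClosed_topologicalClosure _).completeSpace_coe
  have hid : IsCompactOperator (id : W → W) := by
    convert (hK : IsCompactOperator (K : E →ₗ[𝕜] E)).restrict' (V := W)
      fun w hw => (hKW w hw).symm ▸ hw
    ext w
    exact (hKW w w.2).symm
  have := FiniteDimensional.of_isCompactOperator_id (𝕜 := 𝕜) hid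
  exact Submodule.finiteDimensional_of_le (Submodule.le_topologicalClosure _)

end CompactOperator

section HilbertSpace

variable {𝕜 E F : Type*} [RCLike 𝕜] [NormedAddCommGroup E] [InnerProductSpace 𝕜 E]
  [NormedAddCommGroup F] [InnerProductSpace 𝕜 F]

theorem inner_eq_zero_of_hasSum {ι κ : Type*} {f : ι → E} {g : κ → E} {x y : E}
    (hf : HasSum f x) (hg : HasSum g y) (hfg : ∀ i j, ⟪f i, g j⟫_𝕜 = 0) : ⟪x, y⟫_𝕜 = 0 := by
  have hfy : ∀ i, ⟪f i, y⟫_𝕜 = 0 := fun i =>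
    (hg.mapL (innerSL 𝕜 (f i))).unique (by simp [hfg i])
  have hyf : ∀ i, ⟪y, f i⟫_𝕜 = 0 := fun i => inner_eq_zero_symm.mp (hfy i)
  exact inner_eq_zero_symm.mp <| (hf.mapL (innerSL 𝕜 y)).unique (by simp [hyf])

variable [CompleteSpace E] [CompleteSpace F]

theorem Orthonormal.exists_adjoint_comp_eq_ite {ι κ : Type*} [DecidableEq ι] {v : ι × κ → E}
    (hv : Orthonormal 𝕜 v) :
    ∃ U : ι → ℓ²(κ, 𝕜) →L[𝕜] E, ∀ i j, (U i).adjoint ∘L U j = if i = j then 1 else 0 := by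
  have hvi : ∀ i, Orthonormal 𝕜 (fun n => v (i, n)) := fun i =>
    hv.comp _ (Prod.mk_right_injective i)
  refine ⟨fun i => (hvi i).orthogonalFamily.linearIsometry.toContinuousLinearMap, fun i j => ?_⟩
  split_ifs with h
  · subst h
    exact LinearIsometry.adjoint_comp_self _
  · ext1 y
    refine ext_inner_left 𝕜 fun x => ?_
    rw [ContinuousLinearMap.comp_apply, ContinuousLinearMap.adjoint_inner_right, zero_apply,
      inner_zero_right]
    refine inner_eq_zero_of_hasSum ((hvi i).orthogonalFamily.hasSum_linearIsometry x)
      ((hvi j).orthogonalFamily.hasSum_linearIsometry y) fun m n => ?_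
    simp [inner_smul_left, inner_smul_right, hv.2 (by simp [h] : (i, m) ≠ (j, n))]

theorem ContinuousLinearMap.range_adjoint_le_topologicalClosure_range_adjoint_comp_self
    (T : E →L[𝕜] F) :
    LinearMap.range (T.adjoint : F →ₗ[𝕜] E) ≤
      (LinearMap.range ((T.adjoint ∘L T : E →L[𝕜] E) : E →ₗ[𝕜] E)).topologicalClosure := by
  have hself : (T.adjoint ∘L T).adjoint = T.adjoint ∘L T := by
    rw [ContinuousLinearMap.adjoint_comp, ContinuousLinearMap.adjoint_adjoint]
  calc LinearMap.range (T.adjoint : F →ₗ[𝕜] E)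
      ≤ (LinearMap.range (T.adjoint : F →ₗ[𝕜] E))ᗮᗮ := Submodule.le_orthogonal_orthogonal _
    _ = (LinearMap.ker (T.adjoint ∘L T : E →ₗ[𝕜] E))ᗮ := by
        rw [T.adjoint.orthogonal_range, ContinuousLinearMap.adjoint_adjoint,
          ContinuousLinearMap.ker_adjoint_comp_self]
    _ = _ := by
        rw [← Submodule.orthogonal_orthogonal_eq_closure, (T.adjoint ∘L T).orthogonal_range, hself]

end HilbertSpace

section ComplexHilbertSpace

variable {E : Type*} [NormedAddCommGroup E] [InnerProductSpace ℂ E] [CompleteSpace E]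

theorem exists_sqrt_of_finiteDimensional_range {a : E →L[ℂ] E} (ha : 0 ≤ a)
    (hfin : FiniteDimensional ℂ (LinearMap.range (a : E →ₗ[ℂ] E))) :
    ∃ s : E →L[ℂ] E, IsSelfAdjoint s ∧ s * s = a ∧ ‖s‖ = √‖a‖ ∧
      FiniteDimensional ℂ (LinearMap.range (s : E →ₗ[ℂ] E)) := by
  have := hfin
  have hs : IsSelfAdjoint (CFC.sqrt a) := (CFC.sqrt_nonneg a).isSelfAdjoint
  have hss : CFC.sqrt a * CFC.sqrt a = a := CFC.sqrt_mul_sqrt_self a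
  have hle := (CFC.sqrt a).range_adjoint_le_topologicalClosure_range_adjoint_comp_self
  rw [← ContinuousLinearMap.star_eq_adjoint, hs.star_eq, ← ContinuousLinearMap.mul_def, hss,
    (Submodule.closed_of_finiteDimensional _).submodule_topologicalClosure_eq] at hle
  exact ⟨CFC.sqrt a, hs, hss, CFC.norm_sqrt a, Submodule.finiteDimensional_of_le hle⟩

theorem finiteDimensional_range_cfc_max_sub {A : E →L[ℂ] E} (hA : IsCompactOperator A) {ε : ℝ}
    (hε : 0 < ε) :
    FiniteDimensional ℂ (LinearMap.range ((cfc (fun s : ℝ => max (s - ε) 0) A : E →L[ℂ] E) :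
      E →ₗ[ℂ] E)) := by
  -- `A * (max A ε)⁻¹` is compact and acts as the identity on the range of the cutoff.
  refine finiteDimensional_range_of_isCompactOperator_comp_eq
    (K := A * cfc (fun s : ℝ => (max s ε)⁻¹) A) (hA.comp_clm _) ?_
  by_cases hsa : IsSelfAdjoint A
  · have hinv : Continuous fun s : ℝ => (max s ε)⁻¹ :=
      (continuous_id.max continuous_const).inv₀ fun s => (hε.trans_le (le_max_right s ε)).ne'
    have hcut : Continuous fun s : ℝ => max (s - ε) 0 := by fun_prop
    show A * cfc (fun s : ℝ => (max s ε)⁻¹) A * cfc (fun s : ℝ => max (s - ε) 0) A = _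
    nth_rewrite 1 [← cfc_id' ℝ A]
    rw [← cfc_mul (fun s : ℝ => s) _ A continuous_id.continuousOn hinv.continuousOn,
      ← cfc_mul (fun s : ℝ => s * (max s ε)⁻¹) _ A (continuous_id.mul hinv).continuousOn
        hcut.continuousOn]
    refine cfc_congr fun s _ => ?_
    rcases le_total s ε with h | h
    · simp [h]
    · rw [max_eq_left h, mul_inv_cancel₀ (hε.trans_le h).ne', one_mul]
  · simp [cfc_apply_of_not_predicate A hsa]

end ComplexHilbertSpace

theorem isStarProjection_sum_mul_star {R ι : Type*} [Semiring R] [StarRing R] [DecidableEq ι]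
    {v : ι → R}
    (hv : ∀ i j, star (v i) * v j = if i = j then 1 else 0) (s : Finset ι) :
    IsStarProjection (∑ i ∈ s, v i * star (v i)) := by
  refine ⟨?_, isSelfAdjoint_sum s fun i _ => IsSelfAdjoint.mul_star_self (v i)⟩
  show _ * _ = _
  simp_rw [Finset.sum_mul, Finset.mul_sum]
  refine Finset.sum_congr rfl fun i hi => ?_
  have : ∀ j, v i * star (v i) * (v j * star (v j)) = if i = j then v i * star (v i) else 0 := by
    intro j
    rw [mul_assoc, ← mul_assoc (star (v i)), hv]
    split_ifs with h
    · subst h; simp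
    · simp
  simp_rw [this]
  simp [hi]

section CStarAlgebra

variable {A : Type*} [CStarAlgebra A] [PartialOrder A] [StarOrderedRing A]

theorem norm_sum_conj_le {ι : Type*} [DecidableEq ι] {v : ι → A}
    (hv : ∀ i j, star (v i) * v j = if i = j then 1 else 0) {a : ι → A} {C : ℝ} (hC : 0 ≤ C)
    (ha : ∀ i, 0 ≤ a i) (haC : ∀ i, ‖a i‖ ≤ C) (s : Finset ι) :
    ‖∑ i ∈ s, v i * a i * star (v i)‖ ≤ C := by
  have hle : ∑ i ∈ s, v i * a i * star (v i) ≤ C • ∑ i ∈ s, v i * star (v i) := by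
    rw [Finset.smul_sum]
    refine Finset.sum_le_sum fun i _ => ?_
    calc v i * a i * star (v i) ≤ v i * algebraMap ℝ A C * star (v i) :=
          star_right_conjugate_le_conjugate
            ((IsSelfAdjoint.of_nonneg (ha i)).le_algebraMap_norm_self.trans
              (by gcongr; exact haC i)) _
      _ = C • (v i * star (v i)) := by
          rw [Algebra.algebraMap_eq_smul_one, mul_smul_one, smul_mul_assoc]
  have hnonneg : 0 ≤ ∑ i ∈ s, v i * a i * star (v i) :=
    Finset.sum_nonneg fun i _ => star_right_conjugate_nonneg (ha i) _
  calc ‖∑ i ∈ s, v i * a i * star (v i)‖ ≤ ‖C • ∑ i ∈ s, v i * star (v i)‖ :=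
        CStarAlgebra.norm_le_norm_of_nonneg_of_le hnonneg hle
    _ ≤ C * 1 := by
        rw [norm_smul, Real.norm_of_nonneg hC]
        gcongr
        exact (isStarProjection_sum_mul_star hv s).norm_le
    _ = C := mul_one C

theorem norm_cfc_max_sub_le {a : A} (ha : 0 ≤ a) (ε : ℝ) (hε : 0 ≤ ε) :
    ‖cfc (fun s : ℝ => max (s - ε) 0) a‖ ≤ ‖a‖ := by
  refine CStarAlgebra.norm_le_norm_of_nonneg_of_le (cfc_nonneg fun _ _ => le_max_right _ _) ?_
  calc cfc (fun s : ℝ => max (s - ε) 0) a ≤ cfc (fun s : ℝ => s) a :=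
        cfc_mono fun s hs => max_le (by linarith) (spectrum_nonneg_of_nonneg ha hs)
    _ = a := cfc_id' ℝ a

end CStarAlgebra

theorem FinRank.isCompactOperator {T : HS →L[ℂ] HS} (hT : FinRank T) : IsCompactOperator T :=
  have : FiniteDimensional ℂ (LinearMap.range (T : HS →ₗ[ℂ] HS)) := hT
  isCompactOperator_of_finiteDimensional_range T

theorem finRank_zero : FinRank 0 := by
  rw [FinRank, ContinuousLinearMap.toLinearMap_zero, LinearMap.range_zero]
  infer_instance

theorem FinRank.add {S T : HS →L[ℂ] HS} (hS : FinRank S) (hT : FinRank T) : FinRank (S + T) :=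
  have : FiniteDimensional ℂ (LinearMap.range (S : HS →ₗ[ℂ] HS)) := hS
  have : FiniteDimensional ℂ (LinearMap.range (T : HS →ₗ[ℂ] HS)) := hT
  Submodule.finiteDimensional_of_le (LinearMap.range_add_le _ _)

theorem FinRank.sum {ι : Type*} (s : Finset ι) {T : ι → HS →L[ℂ] HS}
    (hT : ∀ i ∈ s, FinRank (T i)) : FinRank (∑ i ∈ s, T i) := by
  classical
  induction s using Finset.induction_on with
  | empty => simpa using finRank_zero
  | insert i s hi ih =>
    rw [Finset.sum_insert hi]
    exact (hT i (s.mem_insert_self i)).add (ih fun j hj => hT j (Finset.mem_insert_of_mem hj))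

theorem FinRank.mul_left (S : HS →L[ℂ] HS) {T : HS →L[ℂ] HS} (hT : FinRank T) :
    FinRank (S * T) := by
  have : FiniteDimensional ℂ (LinearMap.range (T : HS →ₗ[ℂ] HS)) := hT
  show FiniteDimensional ℂ (LinearMap.range ((S : HS →ₗ[ℂ] HS) ∘ₗ (T : HS →ₗ[ℂ] HS)))
  rw [LinearMap.range_comp]
  infer_instance

theorem FinRank.mul_right {S : HS →L[ℂ] HS} (hS : FinRank S) (T : HS →L[ℂ] HS) :
    FinRank (S * T) :=
  have : FiniteDimensional ℂ (LinearMap.range (S : HS →ₗ[ℂ] HS)) := hS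
  Submodule.finiteDimensional_of_le (LinearMap.range_comp_le_range (T : HS →ₗ[ℂ] HS) _)

structure IsPosFinRank {G : Type*} (f : G → HS →L[ℂ] HS) : Prop where
  bdd : Bdd f
  pos : Pos f
  finRank : ∀ t, FinRank (f t)

namespace IsPosFinRank

variable {G : Type*} {f : G → HS →L[ℂ] HS}

theorem cpt (hf : IsPosFinRank f) : Cpt f := fun t => (hf.finRank t).isCompactOperator

theorem comp {H : Type*} (hf : IsPosFinRank f) (φ : H → G) : IsPosFinRank fun t => f (φ t) :=
  ⟨let ⟨C, hC⟩ := hf.bdd; ⟨C, fun t => hC (φ t)⟩, fun t => hf.pos (φ t),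
    fun t => hf.finRank (φ t)⟩

theorem indicator (hf : IsPosFinRank f) (X : Set G) : IsPosFinRank (X.indicator f) := by
  obtain ⟨C, hC⟩ := hf.bdd
  refine ⟨⟨C, fun t => ?_⟩, fun t => ?_, fun t => ?_⟩ <;> by_cases ht : t ∈ X <;>
    simp only [Set.indicator_of_mem, Set.indicator_of_notMem, ht, not_false_eq_true]
  · exact hC t
  · exact norm_zero.trans_le ((norm_nonneg _).trans (hC t))
  · exact hf.pos t
  · exact ContinuousLinearMap.isPositive_zero
  · exact hf.finRank t
  · exact finRank_zero

end IsPosFinRank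

theorem exists_isometries_star_mul_eq_ite :
    ∃ U : ℕ → HS →L[ℂ] HS, ∀ k l, star (U k) * U l = if k = l then 1 else 0 :=
  ((default : HilbertBasis ℕ ℂ HS).orthonormal.comp _
    Nat.pairEquiv.injective).exists_adjoint_comp_eq_ite

theorem isPosFinRank_sum_conj {G : Type*} {U : ℕ → HS →L[ℂ] HS}
    (hU : ∀ k l, star (U k) * U l = if k = l then 1 else 0) {b : ℕ → G → HS →L[ℂ] HS}
    (hb : ∀ k, IsPosFinRank (b k)) {C : ℝ} (hC : ∀ k t, ‖b k t‖ ≤ C) (S : G → Finset ℕ) :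
    IsPosFinRank fun t => ∑ k ∈ S t, U k * b k t * star (U k) := by
  have hb0 : ∀ k t, 0 ≤ b k t := fun k t => (b k t).nonneg_iff_isPositive.mpr ((hb k).pos t)
  refine ⟨⟨max C 0, fun t => ?_⟩, fun t => ?_, fun t => ?_⟩
  · exact norm_sum_conj_le hU (le_max_right C 0) (hb0 · t)
      (fun k => (hC k t).trans (le_max_left C 0)) (S t)
  · exact (ContinuousLinearMap.nonneg_iff_isPositive _).mp
      (Finset.sum_nonneg fun k _ => star_right_conjugate_nonneg (hb0 k t) _)
  · exact FinRank.sum _ fun k _ => (((hb k).finRank t).mul_left _).mul_right _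

structure IsDenselyDefinedTrace {G : Type*} (τ : (G → HS →L[ℂ] HS) → ℝ≥0∞) : Prop where
  add : ∀ f g, Bdd f → Cpt f → Pos f → Bdd g → Cpt g → Pos g → τ (f + g) = τ f + τ g
  trace : ∀ x : G → HS →L[ℂ] HS, Bdd x → Cpt x →
    τ (fun t => star (x t) * x t) = τ (fun t => x t * star (x t))
  finite : ∀ f, Bdd f → Pos f → (∀ t, FinRank (f t)) → τ f ≠ ⊤

namespace IsDenselyDefinedTrace

variable {G : Type*} {τ : (G → HS →L[ℂ] HS) → ℝ≥0∞}

theorem map_add (hτ : IsDenselyDefinedTrace τ) {f g : G → HS →L[ℂ] HS} (hf : IsPosFinRank f)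
    (hg : IsPosFinRank g) : τ (f + g) = τ f + τ g :=
  hτ.add f g hf.bdd hf.cpt hf.pos hg.bdd hg.cpt hg.pos

theorem map_conj (hτ : IsDenselyDefinedTrace τ) {U : HS →L[ℂ] HS} (hU : star U * U = 1)
    {b : G → HS →L[ℂ] HS} (hb : IsPosFinRank b) : τ (fun t => U * b t * star U) = τ b := by
  choose s hsa hss hsn hsfin using fun t =>
    exists_sqrt_of_finiteDimensional_range ((b t).nonneg_iff_isPositive.mpr (hb.pos t))
      (hb.finRank t)
  obtain ⟨C, hC⟩ := hb.bdd
  have hx : Bdd fun t => U * s t := ⟨‖U‖ * √C, fun t =>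
    (norm_mul_le _ _).trans (by rw [hsn]; gcongr; exact hC t)⟩
  have hstar : (fun t => star (U * s t) * (U * s t)) = b := funext fun t => by
    rw [star_mul, (hsa t).star_eq, mul_assoc, ← mul_assoc (star U), hU, one_mul, hss]
  have hconj : (fun t => U * s t * star (U * s t)) = fun t => U * b t * star U := funext fun t => by
    rw [star_mul, (hsa t).star_eq, ← hss, mul_assoc, mul_assoc, mul_assoc]
  have := hτ.trace _ hx fun t => (FinRank.mul_left U (hsfin t)).isCompactOperator
  rwa [hstar, hconj, eq_comm] at this

theorem le_map_add (hτ : IsDenselyDefinedTrace τ) {f g : G → HS →L[ℂ] HS} (hf : IsPosFinRank f)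
    (hg : IsPosFinRank g) : τ f ≤ τ (f + g) :=
  (hτ.map_add hf hg).symm ▸ le_self_add

theorem iInf_eq_zero_of_locallyFinite (hτ : IsDenselyDefinedTrace τ) {b : ℕ → G → HS →L[ℂ] HS}
    (hb : ∀ k, IsPosFinRank (b k)) {C : ℝ} (hC : ∀ k t, ‖b k t‖ ≤ C)
    (hloc : ∀ t, {k | b k t ≠ 0}.Finite) : ⨅ k, τ (b k) = 0 := by
  obtain ⟨U, hU⟩ := exists_isometries_star_mul_eq_ite
  set B : (G → Finset ℕ) → G → HS →L[ℂ] HS := fun S t => ∑ k ∈ S t, U k * b k t * star (U k)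
  have hB : ∀ S, IsPosFinRank (B S) := isPosFinRank_sum_conj hU hb hC
  have hB_mono : ∀ S S' : G → Finset ℕ, (∀ t, S t ⊆ S' t) → τ (B S) ≤ τ (B S') := by
    intro S S' h
    have : B S' = B S + B fun t => S' t \ S t :=
      funext fun t => by
        simp only [B, Pi.add_apply]
        exact (Finset.sum_sdiff (h t)).symm.trans (add_comm _ _)
    exact this ▸ hτ.le_map_add (hB _) (hB _)
  have hB_range : ∀ N : ℕ, N * ⨅ k, τ (b k) ≤ τ (B fun _ => Finset.range N) := by
    intro N
    induction N with
    | zero => simp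
    | succ n ih =>
      have hsucc :
          (B fun _ => Finset.range (n + 1)) = (B fun _ => Finset.range n) + B fun _ => {n} :=
        funext fun t => by
          simp only [B, Pi.add_apply, Finset.sum_singleton]
          exact Finset.sum_range_succ _ n
      have hsingle : τ (B fun _ => {n}) = τ (b n) := by
        simpa [B] using hτ.map_conj (by simpa using hU n n) (hb n)
      rw [hsucc, hτ.map_add (hB _) (hB _), hsingle, Nat.cast_succ, add_mul, one_mul]
      exact add_le_add ih (iInf_le _ n)
  -- All the `B (range N)` sit below the single finite-rank element `B K`.
  set K : G → Finset ℕ := fun t => (hloc t).toFinset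
  have hB_K : ∀ N, (B fun t => Finset.range N ∪ K t) = B K := fun N => funext fun t =>
    (Finset.sum_subset Finset.subset_union_right fun k _ hk => by
      rw [Set.Finite.mem_toFinset, Set.mem_ofPred_eq, not_not] at hk
      simp [hk]).symm
  by_contra hδ
  obtain ⟨N, hN⟩ := ENNReal.exists_nat_mul_gt hδ
    (hτ.finite _ (hB K).bdd (hB K).pos (hB K).finRank)
  refine (hN.trans_le (hB_range N)).not_ge ?_
  rw [← hB_K N]
  exact hB_mono _ _ fun t => Finset.subset_union_left

variable [Group G]

theorem iInf_indicator_eq_zero_of_locallyFinite (hτ : IsDenselyDefinedTrace τ)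
    (hinv : ∀ f, Bdd f → Cpt f → Pos f → ∀ g : G, τ (fun s => f (g⁻¹ * s)) = τ f)
    {g : G → HS →L[ℂ] HS} (hg : IsPosFinRank g) (e : ℕ → G) (X : ℕ → Set G)
    (hloc : ∀ t, {k | (e k)⁻¹ * t ∈ X k}.Finite) : ⨅ k, τ ((X k).indicator g) = 0 := by
  obtain ⟨C, hC⟩ := hg.bdd
  have hX : ∀ k, IsPosFinRank ((X k).indicator g) := fun k => hg.indicator (X k)
  have := hτ.iInf_eq_zero_of_locallyFinite (fun k => (hX k).comp ((e k)⁻¹ * ·)) (C := C)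
    (fun k t => norm_indicator_le_norm_self _ _ |>.trans (hC _))
    fun t => (hloc t).subset fun k hk =>
      by_contra fun hkX => hk (Set.indicator_of_notMem (s := X k) hkX g)
  simpa only [hinv _ (hX _).bdd (hX _).cpt (hX _).pos] using this

theorem eq_zero_of_isPosFinRank [Countable G] [Infinite G] (hτ : IsDenselyDefinedTrace τ)
    (hinv : ∀ f, Bdd f → Cpt f → Pos f → ∀ g : G, τ (fun s => f (g⁻¹ * s)) = τ f)
    {g : G → HS →L[ℂ] HS} (hg : IsPosFinRank g) : τ g = 0 := by
  obtain ⟨_⟩ := nonempty_denumerable G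
  set e : ℕ ≃ G := (Denumerable.eqv G).symm
  by_cases hnull : ∀ S : Set G, S.Finite → τ (S.indicator g) = 0
  · -- `g` lives at infinity: every cofinite part of `g` has the same trace as `g`.
    set S : ℕ → Set G := fun k => (fun j => (e k)⁻¹ * e j) '' Set.Iic k
    have hS : ∀ k, τ ((S k)ᶜ.indicator g) = τ g := fun k => by
      have := hτ.map_add (hg.indicator (S k)) (hg.indicator (S k)ᶜ)
      rwa [Set.indicator_self_add_compl, hnull _ ((Set.finite_Iic k).image _), zero_add,
        eq_comm] at this
    have := iInf_indicator_eq_zero_of_locallyFinite hτ hinv hg e (fun k => (S k)ᶜ) fun t =>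
      (Set.finite_Iio (e.symm t)).subset fun k hk => by
        by_contra hle
        exact hk ⟨e.symm t, (not_lt.mp hle : e.symm t ≤ k), by simp⟩
    simpa only [hS, iInf_const] using this
  · push Not at hnull
    obtain ⟨S, hS, hτS⟩ := hnull
    have := iInf_indicator_eq_zero_of_locallyFinite hτ hinv hg e (fun _ => S) fun t =>
      ((hS.image fun u => t * u⁻¹).image e.symm).subset fun k hk =>
        ⟨e k, ⟨_, hk, by simp⟩, e.symm_apply_apply k⟩
    exact absurd (by simpa only [iInf_const] using this) hτS

end IsDenselyDefinedTrace

theorem stmt18_general (G : Type*) [Group G] [Countable G] [Infinite G]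
    (τ : (G → HS →L[ℂ] HS) → ℝ≥0∞)
    (hadd : ∀ f g, Bdd f → Cpt f → Pos f → Bdd g → Cpt g → Pos g → τ (f + g) = τ f + τ g)
    (htr : ∀ x : G → HS →L[ℂ] HS, Bdd x → Cpt x →
      τ (fun t => star (x t) * x t) = τ (fun t => x t * star (x t)))
    (hlsc : ∀ f, Bdd f → Cpt f → Pos f →
      τ f = ⨆ ε : {ε : ℝ // 0 < ε},
        τ (fun t => cfc (instCFC := IsSelfAdjoint.instContinuousFunctionalCalculus) (fun s : ℝ => max (s - (ε : ℝ)) 0) (f t)))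
    (hfin : ∀ f, Bdd f → Pos f → (∀ t, FinRank (f t)) → τ f ≠ ⊤)
    (hinv : ∀ f, Bdd f → Cpt f → Pos f → ∀ g : G, τ (fun s => f (g⁻¹ * s)) = τ f) :
    ∀ f, Bdd f → Cpt f → Pos f → τ f = 0 := by
  have hτ : IsDenselyDefinedTrace τ := ⟨hadd, htr, hfin⟩
  intro f hb hc hp
  rw [hlsc f hb hc hp, ENNReal.iSup_eq_zero]
  rintro ⟨ε, hε⟩
  obtain ⟨C, hC⟩ := hb
  have hf0 : ∀ t, 0 ≤ f t := fun t => (f t).nonneg_iff_isPositive.mpr (hp t)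
  refine hτ.eq_zero_of_isPosFinRank hinv ⟨⟨C, fun t => ?_⟩, fun t => ?_, fun t => ?_⟩
  · exact (norm_cfc_max_sub_le (hf0 t) ε hε.le).trans (hC t)
  · exact (ContinuousLinearMap.nonneg_iff_isPositive _).mp (cfc_nonneg fun _ _ => le_max_right _ _)
  · exact finiteDimensional_range_cfc_max_sub (hc t) hε

/-- For a countably infinite group `G`, the only `G`-invariant densely defined
lower semi-continuous trace on `ℓ∞(G, K)` (with `G` acting by left translation) is zero. -/
theorem stmt18 (G : Type*) [Group G] [Countable G] [Infinite G]
    (τ : (G → HS →L[ℂ] HS) → ℝ≥0∞)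
    (hadd : ∀ f g, Bdd f → Cpt f → Pos f → Bdd g → Cpt g → Pos g → τ (f + g) = τ f + τ g)
    (hzero : τ 0 = 0)
    (hhom : ∀ f, Bdd f → Cpt f → Pos f → ∀ r : ℝ, 0 < r →
      τ (fun t => r • f t) = ENNReal.ofReal r * τ f)
    (htr : ∀ x : G → HS →L[ℂ] HS, Bdd x → Cpt x →
      τ (fun t => star (x t) * x t) = τ (fun t => x t * star (x t)))
    (hlsc : ∀ f, Bdd f → Cpt f → Pos f →
      τ f = ⨆ ε : {ε : ℝ // 0 < ε},
        τ (fun t => cfc (instCFC := IsSelfAdjoint.instContinuousFunctionalCalculus) (fun s : ℝ => max (s - (ε : ℝ)) 0) (f t)))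
    (hfin : ∀ f, Bdd f → Pos f → (∀ t, FinRank (f t)) → τ f ≠ ⊤)
    (hinv : ∀ f, Bdd f → Cpt f → Pos f → ∀ g : G, τ (fun s => f (g⁻¹ * s)) = τ f) :
    ∀ f, Bdd f → Cpt f → Pos f → τ f = 0 :=
  stmt18_general G τ hadd htr hlsc hfin hinv
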